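/- Let U ⊆ ℝ^{2n} be open, identified with an open subset of ℂ^n via complex coordinates z^m. Let h: U → M_n(ℂ) be a smooth positive-definite Hermitian-matrix-valued function, g the real metric with only mixed nonzero components g_{m n̄} = g_{n̄ m} = h_{m n̄}, Γ its Christoffel symbols, and I the canonical constant complex structure (I_m{}^n = −iδ, I_{m̄}{}^{n̄} = +iδ). Let C be a smooth real totally antisymmetric 3-tensor on U, set Γ̂^Q_{PM} = Γ^Q_{PM} + ½ g^{QS} C_{SPM}, and define ∇̂_L T_N{}^M = ∂_L T_N{}^M − Γ̂^Q_{LN} T_Q{}^M + Γ̂^M_{LQ} T_N{}^Q. Assume: (a) ∇̂_L I_N{}^M + ∇̂_N I_L{}^M = 0 for all indices; and (b) the torsion condition (∂_L C_{[MNS}) I_{R]}{}^L + I_{[S}{}^L (∂_R C_{MN]L}) − 2 C_{L[MN} ∂_R I_{S]}{}^L = 0, with antisymmetrization over the four bracketed indices. Then: (i) assumption (a) alone implies that the mixed components of C are the Bismut torsion: C_{s l n̄} = ∂_l h_{s n̄} − ∂_s h_{l n̄} and C_{s̄ l̄ n} = ∂_{l̄} h_{n s̄} − ∂_{s̄} h_{n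 l̄}; (ii) assumptions (a) and (b) together imply that the purely holomorphic and purely antiholomorphic parts of C are closed: ∂_{[r} C_{mns]} = 0 and ∂_{[r̄} C_{m̄ n̄ s̄]} = 0. -/
import Mathlib


open Complex

noncomputable section

/-- A point of `ℂ^n` (identified with `ℝ^{2n}`). -/
abbrev Pt (n : ℕ) := Fin n → ℂ

/-- A tensor index: `Sum.inl m` is the holomorphic index `m`, `Sum.inr m` the
antiholomorphic index `m̄`. -/
abbrev Idx (n : ℕ) := Fin n ⊕ Fin n

/-- The Wirtinger derivative `∂_M` in the direction of the index `M`: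
`∂_m = ½(∂/∂x^m - i ∂/∂y^m)` and `∂_{m̄} = ½(∂/∂x^m + i ∂/∂y^m)`, expressed through the
real Fréchet derivative. -/
noncomputable def wder {n : ℕ} (M : Idx n) (f : Pt n → ℂ) (z : Pt n) : ℂ :=
  match M with
  | Sum.inl m =>
      (1 / 2 : ℂ) *
        (fderiv ℝ f z (Pi.single m 1) - Complex.I * fderiv ℝ f z (Pi.single m Complex.I))
  | Sum.inr m =>
      (1 / 2 : ℂ) *
        (fderiv ℝ f z (Pi.single m 1) + Complex.I * fderiv ℝ f z (Pi.single m Complex.I))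

open scoped ComplexOrder

/-- The canonical constant complex structure `I`. -/
def Ican (n : ℕ) : Idx n → Idx n → ℂ := fun M N =>
  match M, N with
  | Sum.inl m, Sum.inl k => if m = k then -Complex.I else 0
  | Sum.inr m, Sum.inr k => if m = k then Complex.I else 0
  | _, _ => 0

/-- The components of the Hermitian metric: the only nonzero ones are
`g_{m n̄} = g_{n̄ m} = h_{m n̄}`. -/
noncomputable def gfun {n : ℕ} (h : Pt n → Matrix (Fin n) (Fin n) ℂ) :
    Idx n → Idx n → Pt n → ℂ := fun M N x =>
  match M, N with
  | Sum.inl m, Sum.inr k => h x m k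
  | Sum.inr k, Sum.inl m => h x m k
  | _, _ => 0

/-- The metric as a matrix (for inverting). -/
noncomputable def gmat {n : ℕ} (h : Pt n → Matrix (Fin n) (Fin n) ℂ) (x : Pt n) :
    Matrix (Idx n) (Idx n) ℂ := Matrix.of fun M N => gfun h M N x

/-- The Christoffel symbols `Γ^Q_{PM} = ½ g^{QN}(∂_P g_{NM} + ∂_M g_{NP} - ∂_N g_{PM})`. -/
noncomputable def christ {n : ℕ} (h : Pt n → Matrix (Fin n) (Fin n) ℂ)
    (Q P M : Idx n) (x : Pt n) : ℂ :=
  (1 / 2 : ℂ) * ∑ N : Idx n, (gmat h x)⁻¹ Q N *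
    (wder P (gfun h N M) x + wder M (gfun h N P) x - wder N (gfun h P M) x)

/-- The torsionful Bismut-type connection `Γ̂^Q_{PM} = Γ^Q_{PM} + ½ g^{QS} C_{SPM}`. -/
noncomputable def bism {n : ℕ} (h : Pt n → Matrix (Fin n) (Fin n) ℂ)
    (C : Idx n → Idx n → Idx n → Pt n → ℂ) (Q P M : Idx n) (x : Pt n) : ℂ :=
  christ h Q P M x + (1 / 2 : ℂ) * ∑ S : Idx n, (gmat h x)⁻¹ Q S * C S P M x

/-- `I` as a (constant) tensor field. -/
def IcanT (n : ℕ) : Idx n → Idx n → Pt n → ℂ := fun M N _ => Ican n M N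

/-- Covariant derivative `∇̂_L T_N{}^M = ∂_L T_N{}^M - Γ̂^Q_{LN} T_Q{}^M + Γ̂^M_{LQ} T_N{}^Q`. -/
noncomputable def covd {n : ℕ} (Γ : Idx n → Idx n → Idx n → Pt n → ℂ)
    (T : Idx n → Idx n → Pt n → ℂ) (L N M : Idx n) (x : Pt n) : ℂ :=
  wder L (T N M) x - (∑ Q : Idx n, Γ Q L N x * T Q M x) + ∑ Q : Idx n, Γ M L Q x * T N Q x

/-- Total antisymmetrization of a 4-slot expression over its four indices. -/
noncomputable def alt4 {n : ℕ} (f : Idx n → Idx n → Idx n → Idx n → ℂ)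
    (M N S R : Idx n) : ℂ :=
  ∑ σ : Equiv.Perm (Fin 4),
    ((Equiv.Perm.sign σ : ℤ) : ℂ) *
      f (![M, N, S, R] (σ 0)) (![M, N, S, R] (σ 1)) (![M, N, S, R] (σ 2)) (![M, N, S, R] (σ 3))

/-! ### Auxiliary lemmas -/

lemma wder_const {n : ℕ} (M : Idx n) (c : ℂ) (x : Pt n) : wder M (fun _ => c) x = 0 := by
  cases M <;> simp [wder]

/-- `ε M` is `-i` on holomorphic and `+i` on antiholomorphic indices. -/
def eps {n : ℕ} (M : Idx n) : ℂ := Sum.elim (fun _ => -Complex.I) (fun _ => Complex.I) M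

lemma sum_Ican_right {n : ℕ} (f : Idx n → ℂ) (M : Idx n) :
    ∑ Q : Idx n, f Q * Ican n M Q = f M * eps M := by
  cases M with
  | inl m => simp [Fintype.sum_sum_type, Ican, eps, mul_ite]
  | inr m => simp [Fintype.sum_sum_type, Ican, eps, mul_ite]

lemma sum_Ican_right' {n : ℕ} (f : Idx n → ℂ) (M : Idx n) :
    ∑ Q : Idx n, Ican n M Q * f Q = eps M * f M := by
  calc ∑ Q : Idx n, Ican n M Q * f Q = ∑ Q : Idx n, f Q * Ican n M Q :=
        Finset.sum_congr rfl fun Q _ => mul_comm _ _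
    _ = f M * eps M := sum_Ican_right f M
    _ = eps M * f M := mul_comm _ _

lemma sum_Ican_left {n : ℕ} (f : Idx n → ℂ) (M : Idx n) :
    ∑ Q : Idx n, f Q * Ican n Q M = f M * eps M := by
  cases M with
  | inl m => simp [Fintype.sum_sum_type, Ican, eps, mul_ite]
  | inr m => simp [Fintype.sum_sum_type, Ican, eps, mul_ite]

lemma covd_Ican {n : ℕ} (Γ : Idx n → Idx n → Idx n → Pt n → ℂ) (L N M : Idx n) (x : Pt n) :
    covd Γ (IcanT n) L N M x = Γ M L N x * (eps N - eps M) := by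
  unfold covd IcanT
  rw [wder_const, sum_Ican_left, sum_Ican_right]
  ring

lemma gmat_eq {n : ℕ} (h : Pt n → Matrix (Fin n) (Fin n) ℂ) (x : Pt n) :
    gmat h x = Matrix.fromBlocks 0 (h x) (h x).transpose 0 := by
  ext M N
  cases M <;> cases N <;> simp [gmat, gfun, Matrix.fromBlocks]

lemma gmat_inv {n : ℕ} (h : Pt n → Matrix (Fin n) (Fin n) ℂ) (x : Pt n)
    (hp : (h x).PosDef) :
    (gmat h x)⁻¹ = Matrix.fromBlocks 0 ((h x).transpose)⁻¹ (h x)⁻¹ 0 := by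
  apply Matrix.inv_eq_right_inv
  rw [gmat_eq, Matrix.fromBlocks_multiply]
  have h1 : h x * (h x)⁻¹ = 1 := Matrix.mul_nonsing_inv _ hp.det_pos.ne'.isUnit
  have h2 : (h x).transpose * ((h x).transpose)⁻¹ = 1 := by
    rw [← Matrix.transpose_nonsing_inv, ← Matrix.transpose_mul,
      Matrix.nonsing_inv_mul _ hp.det_pos.ne'.isUnit, Matrix.transpose_one]
  simp [h1, h2, Matrix.fromBlocks_one]

lemma bism_rr {n : ℕ} (h : Pt n → Matrix (Fin n) (Fin n) ℂ)
    (C : Idx n → Idx n → Idx n → Pt n → ℂ) (m l k : Fin n) (x : Pt n)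
    (hp : (h x).PosDef) :
    bism h C (Sum.inr m) (Sum.inr l) (Sum.inl k) x
      = (1/2 : ℂ) * ∑ s : Fin n, (h x)⁻¹ m s *
          (wder (Sum.inl k) (fun y => h y s l) x - wder (Sum.inl s) (fun y => h y k l) x
            + C (Sum.inl s) (Sum.inr l) (Sum.inl k) x) := by
  unfold bism christ
  rw [gmat_inv h x hp]
  rw [Fintype.sum_sum_type, Fintype.sum_sum_type]
  have e1 : ∀ s : Fin n, gfun h (Sum.inl s) (Sum.inl k) = fun _ => (0:ℂ) := fun _ => rfl
  have e2 : ∀ s : Fin n, gfun h (Sum.inl s) (Sum.inr l) = fun y => h y s l := fun _ => rfl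
  have e3 : gfun h (Sum.inr l) (Sum.inl k) = fun y => h y k l := rfl
  simp only [e1, e2, e3, wder_const, Matrix.fromBlocks_apply₂₁, Matrix.fromBlocks_apply₂₂,
    Matrix.zero_apply, zero_mul, Finset.sum_const_zero, add_zero, zero_add]
  rw [Finset.mul_sum, Finset.mul_sum, ← Finset.sum_add_distrib, Finset.mul_sum]
  refine Finset.sum_congr rfl fun s _ => by ring

lemma bism_ll {n : ℕ} (h : Pt n → Matrix (Fin n) (Fin n) ℂ)
    (C : Idx n → Idx n → Idx n → Pt n → ℂ) (m l k : Fin n) (x : Pt n)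
    (hp : (h x).PosDef) :
    bism h C (Sum.inl m) (Sum.inl l) (Sum.inr k) x
      = (1/2 : ℂ) * ∑ s : Fin n, ((h x).transpose)⁻¹ m s *
          (wder (Sum.inr k) (fun y => h y l s) x - wder (Sum.inr s) (fun y => h y l k) x
            + C (Sum.inr s) (Sum.inl l) (Sum.inr k) x) := by
  unfold bism christ
  rw [gmat_inv h x hp]
  rw [Fintype.sum_sum_type, Fintype.sum_sum_type]
  have e1 : ∀ s : Fin n, gfun h (Sum.inr s) (Sum.inr k) = fun _ => (0:ℂ) := fun _ => rfl
  have e2 : ∀ s : Fin n, gfun h (Sum.inr s) (Sum.inl l) = fun y => h y l s := fun _ => rfl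
  have e3 : gfun h (Sum.inl l) (Sum.inr k) = fun y => h y l k := rfl
  simp only [e1, e2, e3, wder_const, Matrix.fromBlocks_apply₁₁, Matrix.fromBlocks_apply₁₂,
    Matrix.zero_apply, zero_mul, Finset.sum_const_zero, add_zero, zero_add]
  rw [Finset.mul_sum, Finset.mul_sum, ← Finset.sum_add_distrib, Finset.mul_sum]
  refine Finset.sum_congr rfl fun s _ => by ring

lemma inv_contract_zero {n : ℕ} (A : Matrix (Fin n) (Fin n) ℂ) (hA : IsUnit A.det)
    (v : Fin n → ℂ) (hv : ∀ m, ∑ s, A⁻¹ m s * v s = 0) : ∀ s, v s = 0 := by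
  have h0 : A⁻¹.mulVec v = 0 := by
    funext m
    simpa [Matrix.mulVec, dotProduct] using hv m
  have h1 : v = A.mulVec (A⁻¹.mulVec v) := by
    rw [Matrix.mulVec_mulVec, Matrix.mul_nonsing_inv _ hA, Matrix.one_mulVec]
  intro s
  rw [h1, h0, Matrix.mulVec_zero]
  rfl

lemma alt4_congr {n : ℕ} (f g : Idx n → Idx n → Idx n → Idx n → ℂ) (M N S R : Idx n)
    (hfg : ∀ i j k l : Fin 4, f (![M,N,S,R] i) (![M,N,S,R] j) (![M,N,S,R] k) (![M,N,S,R] l)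
      = g (![M,N,S,R] i) (![M,N,S,R] j) (![M,N,S,R] k) (![M,N,S,R] l)) :
    alt4 f M N S R = alt4 g M N S R := by
  unfold alt4
  exact Finset.sum_congr rfl fun σ _ => by rw [hfg]

lemma alt4_comp_perm {n : ℕ} (f : Idx n → Idx n → Idx n → Idx n → ℂ)
    (τ : Equiv.Perm (Fin 4)) (M N S R : Idx n) :
    alt4 (fun a b c d =>
        f (![a,b,c,d] (τ 0)) (![a,b,c,d] (τ 1)) (![a,b,c,d] (τ 2)) (![a,b,c,d] (τ 3))) M N S R
      = ((Equiv.Perm.sign τ : ℤ) : ℂ) * alt4 f M N S R := by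
  unfold alt4
  rw [Finset.mul_sum]
  refine Fintype.sum_equiv (Equiv.mulRight τ) _ _ (fun σ => ?_)
  have hv : ∀ j : Fin 4, ![![M,N,S,R] (σ 0), ![M,N,S,R] (σ 1), ![M,N,S,R] (σ 2), ![M,N,S,R] (σ 3)] j
      = ![M,N,S,R] (σ j) := by
    intro j; fin_cases j <;> rfl
  simp only [hv, Equiv.coe_mulRight, Equiv.Perm.mul_apply]
  rw [map_mul]
  rcases Int.units_eq_one_or (Equiv.Perm.sign σ) with h1 | h1 <;>
    rcases Int.units_eq_one_or (Equiv.Perm.sign τ) with h2 | h2 <;>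
      simp [h1, h2] <;> ring

lemma alt4_add {n : ℕ} (f g : Idx n → Idx n → Idx n → Idx n → ℂ) (M N S R : Idx n) :
    alt4 (fun a b c d => f a b c d + g a b c d) M N S R
      = alt4 f M N S R + alt4 g M N S R := by
  unfold alt4
  rw [← Finset.sum_add_distrib]
  exact Finset.sum_congr rfl fun σ _ => by ring

lemma alt4_smul {n : ℕ} (c : ℂ) (f : Idx n → Idx n → Idx n → Idx n → ℂ) (M N S R : Idx n) :
    alt4 (fun a b c' d => c * f a b c' d) M N S R = c * alt4 f M N S R := by
  unfold alt4
  rw [Finset.mul_sum]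
  exact Finset.sum_congr rfl fun σ _ => by ring

def tau1 : Equiv.Perm (Fin 4) := ⟨![3,0,1,2], ![1,2,3,0], by decide, by decide⟩
def tau2 : Equiv.Perm (Fin 4) := ⟨![1,2,3,0], ![3,0,1,2], by decide, by decide⟩

lemma sign_tau1 : (Equiv.Perm.sign tau1 : ℤ) = -1 := by decide
lemma sign_tau2 : (Equiv.Perm.sign tau2 : ℤ) = -1 := by decide

lemma alt4_rot1 {n : ℕ} (T : Idx n → Idx n → Idx n → Idx n → ℂ) (M N S R : Idx n) :
    alt4 (fun a b c d => T d a b c) M N S R = -alt4 T M N S R := by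
  have e : (fun a b c d : Idx n => T d a b c) = fun a b c d =>
      T (![a,b,c,d] (tau1 0)) (![a,b,c,d] (tau1 1)) (![a,b,c,d] (tau1 2)) (![a,b,c,d] (tau1 3)) := by
    funext a b c d; rfl
  rw [e, alt4_comp_perm, sign_tau1]
  push_cast; ring

lemma alt4_rot2 {n : ℕ} (T : Idx n → Idx n → Idx n → Idx n → ℂ) (M N S R : Idx n) :
    alt4 (fun a b c d => T b c d a) M N S R = -alt4 T M N S R := by
  have e : (fun a b c d : Idx n => T b c d a) = fun a b c d =>
      T (![a,b,c,d] (tau2 0)) (![a,b,c,d] (tau2 1)) (![a,b,c,d] (tau2 2)) (![a,b,c,d] (tau2 3)) := by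
    funext a b c d; rfl
  rw [e, alt4_comp_perm, sign_tau2]
  push_cast; ring

/-- Theorem 4: let `C` be a smooth real totally antisymmetric 3-tensor
such that (a) `∇̂_L I_N{}^M + ∇̂_N I_L{}^M = 0` for the torsionful connection
`Γ̂ = Γ + ½ g⁻¹ C`, and (b) the torsion condition
`(∂_L C_{[MNS}) I_{R]}{}^L + I_{[S}{}^L (∂_R C_{MN]L}) - 2 C_{L[MN} ∂_R I_{S]}{}^L = 0`
holds (total antisymmetrization over the four bracketed indices).  Then (i) the mixed
components of `C` are the Bismut torsion of `I`, and (ii) the purely holomorphic and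
purely antiholomorphic parts of `C` are closed. -/
theorem stmt10 (n : ℕ) (U : Set (Pt n)) (hU : IsOpen U)
    (h : Pt n → Matrix (Fin n) (Fin n) ℂ)
    (hsm : ∀ m k, ContDiffOn ℝ (⊤ : ℕ∞) (fun x => h x m k) U)
    (hpos : ∀ x ∈ U, (h x).PosDef)
    (C : Idx n → Idx n → Idx n → Pt n → ℂ)
    (hCsm : ∀ S P M, ContDiffOn ℝ (⊤ : ℕ∞) (C S P M) U)
    (hCreal : ∀ (S P M : Idx n), ∀ x ∈ U,
      C (Sum.swap S) (Sum.swap P) (Sum.swap M) x = (starRingEnd ℂ) (C S P M x))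
    (hCanti : ∀ (S P M : Idx n), ∀ x ∈ U,
      C S P M x = -C P S M x ∧ C S P M x = -C S M P x)
    (ha : ∀ (L N M : Idx n), ∀ x ∈ U,
      covd (bism h C) (IcanT n) L N M x + covd (bism h C) (IcanT n) N L M x = 0)
    (hb : ∀ (M N S R : Idx n), ∀ x ∈ U,
      alt4 (fun a b c d =>
        (∑ L : Idx n, wder L (C a b c) x * Ican n d L) +
        (∑ L : Idx n, Ican n a L * wder b (C c d L) x) -
        2 * (∑ L : Idx n, C L a b x * wder c (fun _ => Ican n d L) x)) M N S R = 0) :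
    (∀ (s l m : Fin n), ∀ x ∈ U,
      C (Sum.inl s) (Sum.inl l) (Sum.inr m) x =
          wder (Sum.inl l) (fun y => h y s m) x - wder (Sum.inl s) (fun y => h y l m) x ∧
      C (Sum.inr s) (Sum.inr l) (Sum.inl m) x =
          wder (Sum.inr l) (fun y => h y m s) x - wder (Sum.inr s) (fun y => h y m l) x) ∧
    (∀ (r m nn s : Fin n), ∀ x ∈ U,
      alt4 (fun a b c d => wder a (C b c d) x)
        (Sum.inl r) (Sum.inl m) (Sum.inl nn) (Sum.inl s) = 0 ∧
      alt4 (fun a b c d => wder a (C b c d) x)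
        (Sum.inr r) (Sum.inr m) (Sum.inr nn) (Sum.inr s) = 0) := by
  constructor
  · -- Part (i)
    intro s l m x hx
    have hp := hpos x hx
    have key : ∀ L N M : Idx n,
        bism h C M L N x * (eps N - eps M) + bism h C M N L x * (eps L - eps M) = 0 := by
      intro L N M
      have hA := ha L N M x hx
      rwa [covd_Ican, covd_Ican] at hA
    -- vanishing of Γ̂^{m̄}_{l̄ k}
    have hz1 : ∀ (m' l' k' : Fin n), bism h C (Sum.inr m') (Sum.inr l') (Sum.inl k') x = 0 := by
      intro m' l' k'
      have hA := key (Sum.inr l') (Sum.inl k') (Sum.inr m')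
      simp only [eps, Sum.elim_inl, Sum.elim_inr, sub_self, mul_zero, add_zero] at hA
      have hne : (-Complex.I - Complex.I : ℂ) ≠ 0 := by
        intro hc
        apply Complex.I_ne_zero
        linear_combination (-1/2 : ℂ) * hc
      exact (mul_eq_zero.mp hA).resolve_right hne
    -- vanishing of Γ̂^{m}_{l k̄}
    have hz2 : ∀ (m' l' k' : Fin n), bism h C (Sum.inl m') (Sum.inl l') (Sum.inr k') x = 0 := by
      intro m' l' k'
      have hA := key (Sum.inl l') (Sum.inr k') (Sum.inl m')
      simp only [eps, Sum.elim_inl, Sum.elim_inr, sub_self, mul_zero, add_zero] at hA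
      have hne : (Complex.I - -Complex.I : ℂ) ≠ 0 := by
        intro hc
        apply Complex.I_ne_zero
        linear_combination (1/2 : ℂ) * hc
      exact (mul_eq_zero.mp hA).resolve_right hne
    have hv1 : ∀ (l' k' s' : Fin n),
        wder (Sum.inl k') (fun y => h y s' l') x - wder (Sum.inl s') (fun y => h y k' l') x
          + C (Sum.inl s') (Sum.inr l') (Sum.inl k') x = 0 := by
      intro l' k'
      apply inv_contract_zero (h x) hp.det_pos.ne'.isUnit
      intro m'
      have e := hz1 m' l' k'
      rw [bism_rr h C m' l' k' x hp] at e
      exact (mul_eq_zero.mp e).resolve_left (by norm_num)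
    have hv2 : ∀ (l' k' s' : Fin n),
        wder (Sum.inr k') (fun y => h y l' s') x - wder (Sum.inr s') (fun y => h y l' k') x
          + C (Sum.inr s') (Sum.inl l') (Sum.inr k') x = 0 := by
      intro l' k'
      apply inv_contract_zero ((h x).transpose)
        (by rw [Matrix.det_transpose]; exact hp.det_pos.ne'.isUnit)
      intro m'
      have e := hz2 m' l' k'
      rw [bism_ll h C m' l' k' x hp] at e
      exact (mul_eq_zero.mp e).resolve_left (by norm_num)
    constructor
    · have e := (hCanti (Sum.inl s) (Sum.inr m) (Sum.inl l) x hx).2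
      linear_combination e - hv1 m l s
    · have e := (hCanti (Sum.inr s) (Sum.inl m) (Sum.inr l) x hx).2
      linear_combination e - hv2 m l s
  · -- Part (ii)
    intro r m nn s x hx
    constructor
    · have hb0 := hb (Sum.inl r) (Sum.inl m) (Sum.inl nn) (Sum.inl s) x hx
      have hvec : ∀ i : Fin 4,
          ∃ a : Fin n, ![(Sum.inl r : Idx n), Sum.inl m, Sum.inl nn, Sum.inl s] i = Sum.inl a := by
        intro i; fin_cases i <;> exact ⟨_, rfl⟩
      have e := alt4_congr
        (fun a b c d =>
          (∑ L : Idx n, wder L (C a b c) x * Ican n d L) +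
          (∑ L : Idx n, Ican n a L * wder b (C c d L) x) -
          2 * (∑ L : Idx n, C L a b x * wder c (fun _ => Ican n d L) x))
        (fun a b c d => -Complex.I * wder d (C a b c) x + -Complex.I * wder b (C c d a) x)
        (Sum.inl r) (Sum.inl m) (Sum.inl nn) (Sum.inl s)
        (by
          intro i j k l
          obtain ⟨a, ea⟩ := hvec i
          obtain ⟨b, eb⟩ := hvec j
          obtain ⟨c, ec⟩ := hvec k
          obtain ⟨d, ed⟩ := hvec l
          rw [ea, eb, ec, ed]
          simp only [sum_Ican_right, sum_Ican_right', wder_const, mul_zero,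
            Finset.sum_const_zero, eps, Sum.elim_inl]
          ring)
      rw [e] at hb0
      have step : alt4 (fun a b c d => -Complex.I * wder d (C a b c) x
            + -Complex.I * wder b (C c d a) x) (Sum.inl r) (Sum.inl m) (Sum.inl nn) (Sum.inl s)
          = 2 * Complex.I * alt4 (fun a b c d => wder a (C b c d) x)
              (Sum.inl r) (Sum.inl m) (Sum.inl nn) (Sum.inl s) := by
        rw [alt4_add, alt4_smul, alt4_smul]
        have r1 : alt4 (fun a b c d : Idx n => wder d (C a b c) x)
              (Sum.inl r) (Sum.inl m) (Sum.inl nn) (Sum.inl s)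
            = -alt4 (fun a b c d => wder a (C b c d) x)
              (Sum.inl r) (Sum.inl m) (Sum.inl nn) (Sum.inl s) := alt4_rot1 _ _ _ _ _
        have r2 : alt4 (fun a b c d : Idx n => wder b (C c d a) x)
              (Sum.inl r) (Sum.inl m) (Sum.inl nn) (Sum.inl s)
            = -alt4 (fun a b c d => wder a (C b c d) x)
              (Sum.inl r) (Sum.inl m) (Sum.inl nn) (Sum.inl s) := alt4_rot2 _ _ _ _ _
        rw [r1, r2]; ring
      rw [step] at hb0
      exact (mul_eq_zero.mp hb0).resolve_left (mul_ne_zero two_ne_zero Complex.I_ne_zero)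
    · have hb0 := hb (Sum.inr r) (Sum.inr m) (Sum.inr nn) (Sum.inr s) x hx
      have hvec : ∀ i : Fin 4,
          ∃ a : Fin n, ![(Sum.inr r : Idx n), Sum.inr m, Sum.inr nn, Sum.inr s] i = Sum.inr a := by
        intro i; fin_cases i <;> exact ⟨_, rfl⟩
      have e := alt4_congr
        (fun a b c d =>
          (∑ L : Idx n, wder L (C a b c) x * Ican n d L) +
          (∑ L : Idx n, Ican n a L * wder b (C c d L) x) -
          2 * (∑ L : Idx n, C L a b x * wder c (fun _ => Ican n d L) x))
        (fun a b c d => Complex.I * wder d (C a b c) x + Complex.I * wder b (C c d a) x)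
        (Sum.inr r) (Sum.inr m) (Sum.inr nn) (Sum.inr s)
        (by
          intro i j k l
          obtain ⟨a, ea⟩ := hvec i
          obtain ⟨b, eb⟩ := hvec j
          obtain ⟨c, ec⟩ := hvec k
          obtain ⟨d, ed⟩ := hvec l
          rw [ea, eb, ec, ed]
          simp only [sum_Ican_right, sum_Ican_right', wder_const, mul_zero,
            Finset.sum_const_zero, eps, Sum.elim_inr]
          ring)
      rw [e] at hb0
      have step : alt4 (fun a b c d => Complex.I * wder d (C a b c) x
            + Complex.I * wder b (C c d a) x) (Sum.inr r) (Sum.inr m) (Sum.inr nn) (Sum.inr s)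
          = -(2 * Complex.I) * alt4 (fun a b c d => wder a (C b c d) x)
              (Sum.inr r) (Sum.inr m) (Sum.inr nn) (Sum.inr s) := by
        rw [alt4_add, alt4_smul, alt4_smul]
        have r1 : alt4 (fun a b c d : Idx n => wder d (C a b c) x)
              (Sum.inr r) (Sum.inr m) (Sum.inr nn) (Sum.inr s)
            = -alt4 (fun a b c d => wder a (C b c d) x)
              (Sum.inr r) (Sum.inr m) (Sum.inr nn) (Sum.inr s) := alt4_rot1 _ _ _ _ _
        have r2 : alt4 (fun a b c d : Idx n => wder b (C c d a) x)
              (Sum.inr r) (Sum.inr m) (Sum.inr nn) (Sum.inr s)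
            = -alt4 (fun a b c d => wder a (C b c d) x)
              (Sum.inr r) (Sum.inr m) (Sum.inr nn) (Sum.inr s) := alt4_rot2 _ _ _ _ _
        rw [r1, r2]; ring
      rw [step] at hb0
      exact (mul_eq_zero.mp hb0).resolve_left
        (neg_ne_zero.mpr (mul_ne_zero two_ne_zero Complex.I_ne_zero))
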